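/- arXiv:2009.03827 — 2 statements merged into one kernel-verified Lean document; each statement's English description precedes it below -/
import Mathlib

section
/- Let k : ℝ^d \ {0} → ℂ satisfy |k(x)| ≤ C|x|^{-d}, the γ-Lipschitz condition |k(x) - k(x-y)| ≤ C|y|^γ/|x|^{d+γ} for |x| ≥ 2|y|, and the cancellation condition sup_{0<r<R<∞}|∫_{r<|x|<R} k(x)dx| ≤ C. Let φ be a smooth, radial, radially decreasing nonnegative function supported in B(0, 1/2) with ∫φ = 1, and φ_ε(x) = ε^{-d}φ(x/ε). Then for all ε > 0 and x ∈ ℝ^d, |k(x)·1_{|x|>ε} - (φ_ε * k)(x)| ≤ C' · ε^{-d}(1 + |x|/ε)^{-(d+γ)}, where C' depends only on d, γ, C. -/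
open MeasureTheory Metric Set


theorem dyadic_bound {d : ℕ} (hd : 1 ≤ d) (R L Cc : ℝ) (hR : 0 < R) (hL : 0 ≤ L) (hCc : 0 ≤ Cc)
    (g : EuclideanSpace ℝ (Fin d) → ℂ)
    (hg0 : ∀ z : EuclideanSpace ℝ (Fin d), ¬(0 < ‖z‖ ∧ ‖z‖ ≤ R) → g z = 0)
    (hbound : ∀ z : EuclideanSpace ℝ (Fin d), 0 < ‖z‖ → ‖z‖ ≤ R →
      ‖g z‖ ≤ L * ‖z‖ * (Cc / ‖z‖ ^ d)) :
    ‖∫ z, g z‖ ≤ L * Cc * 2 ^ (d + 1) * R *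
      (volume (closedBall (0 : EuclideanSpace ℝ (Fin d)) 1)).toReal := by
  classical

  set v : ENNReal := volume (closedBall (0 : EuclideanSpace ℝ (Fin d)) 1) with hv
  have hvfin : v ≠ ⊤ := measure_closedBall_lt_top.ne
  have hfinrank : Module.finrank ℝ (EuclideanSpace ℝ (Fin d)) = d := finrank_euclideanSpace_fin
  -- dyadic radii
  set r : ℕ → ℝ := fun j => R * (2 : ℝ)⁻¹ ^ j with hr
  have hrpos : ∀ j, 0 < r j := fun j => by positivity
  -- annuli
  set A : ℕ → Set (EuclideanSpace ℝ (Fin d)) := fun j => {z : EuclideanSpace ℝ (Fin d) | r (j + 1) < ‖z‖ ∧ ‖z‖ ≤ r j} with hA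
  have hAmeas : ∀ j, MeasurableSet (A j) :=
    fun j => ((isOpen_lt continuous_const continuous_norm).measurableSet).inter
      ((isClosed_le continuous_norm continuous_const).measurableSet)
  have hrmono : ∀ {i j : ℕ}, i ≤ j → r j ≤ r i := by
    intro i j hij
    apply mul_le_mul_of_nonneg_left _ hR.le
    exact pow_le_pow_of_le_one (by norm_num) (by norm_num) hij
  have hAdisj : Pairwise (Function.onFun Disjoint A) := by
    have key : ∀ i j, i < j → Disjoint (A i) (A j) := by
      intro i j hlt
      refine Set.disjoint_left.2 fun z hzi hzj => ?_
      have h1 : r (i + 1) < ‖z‖ := hzi.1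
      have h2 : ‖z‖ ≤ r j := hzj.2
      have h3 : r j ≤ r (i + 1) := hrmono (by omega)
      linarith
    intro i j hij
    rcases lt_or_gt_of_ne hij with h | h
    · exact key i j h
    · exact (key j i h).symm
  have hAunion : (⋃ j, A j) = {z : EuclideanSpace ℝ (Fin d) | 0 < ‖z‖ ∧ ‖z‖ ≤ R} := by
    ext z
    simp only [mem_iUnion, hA, mem_setOf_eq]
    constructor
    · rintro ⟨j, h1, h2⟩
      exact ⟨lt_trans (hrpos (j + 1)) h1, h2.trans (by simpa [hr] using hrmono (Nat.zero_le j))⟩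
    · rintro ⟨h0, hle⟩
      have hex : ∃ j, r (j + 1) < ‖z‖ := by
        obtain ⟨n, hn⟩ := exists_pow_lt_of_lt_one (div_pos h0 hR) (by norm_num : (2:ℝ)⁻¹ < 1)
        refine ⟨n, ?_⟩
        have h1 : R * (2:ℝ)⁻¹ ^ n < R * (‖z‖ / R) := mul_lt_mul_of_pos_left hn hR
        have h2 : R * (‖z‖ / R) = ‖z‖ := by field_simp
        have h3 : r (n + 1) ≤ r n := hrmono (Nat.le_succ n)
        have : r n < ‖z‖ := by rw [hr]; dsimp only; rw [← h2]; exact h1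
        linarith
      have hspec : r (Nat.find hex + 1) < ‖z‖ := Nat.find_spec hex
      refine ⟨Nat.find hex, hspec, ?_⟩
      rcases Nat.eq_zero_or_pos (Nat.find hex) with h0' | hpos
      · rw [h0']; simpa [hr] using hle
      · have hmin := Nat.find_min hex (Nat.sub_lt hpos one_pos)
        have heq : Nat.find hex - 1 + 1 = Nat.find hex := by omega
        rw [heq] at hmin
        exact not_lt.1 hmin
  -- support set
  set S : Set (EuclideanSpace ℝ (Fin d)) := {z : EuclideanSpace ℝ (Fin d) | 0 < ‖z‖ ∧ ‖z‖ ≤ R} with hS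
  have hSmeas : MeasurableSet S := by rw [← hAunion]; exact MeasurableSet.iUnion hAmeas
  -- per-annulus bound
  have hann : ∀ j, (∫⁻ z in A j, ENNReal.ofReal ‖g z‖) ≤
      ENNReal.ofReal (L * Cc * 2 ^ d * R) * (ENNReal.ofReal ((2:ℝ)⁻¹ ^ j) * v) := by
    intro j
    have hrj := hrpos j
    have hb : ∀ z ∈ A j, ENNReal.ofReal ‖g z‖ ≤
        ENNReal.ofReal (L * r j * (Cc * 2 ^ d / r j ^ d)) := by
      rintro z ⟨hz1, hz2⟩
      apply ENNReal.ofReal_le_ofReal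
      have hz0 : 0 < ‖z‖ := lt_trans (hrpos (j+1)) hz1
      have hzR : ‖z‖ ≤ R := hz2.trans (by simpa [hr] using hrmono (Nat.zero_le j))
      refine (hbound z hz0 hzR).trans ?_
      have hhalf : r j / 2 < ‖z‖ := by
        have : r (j + 1) = r j / 2 := by simp [hr, pow_succ]; ring
        linarith [hz1, this.symm.le]
      have hpow : (r j / 2) ^ d ≤ ‖z‖ ^ d := pow_le_pow_left₀ (by positivity) hhalf.le d
      have hdiv : Cc / ‖z‖ ^ d ≤ Cc * 2 ^ d / r j ^ d := by
        have h1 : Cc / ‖z‖ ^ d ≤ Cc / (r j / 2) ^ d :=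
          div_le_div_of_nonneg_left hCc (by positivity) hpow
        have h2 : Cc / (r j / 2) ^ d = Cc * 2 ^ d / r j ^ d := by
          rw [div_pow]; field_simp
        linarith [h1, h2.le]
      have hgz : 0 ≤ Cc / ‖z‖ ^ d := by positivity
      calc L * ‖z‖ * (Cc / ‖z‖ ^ d) ≤ L * r j * (Cc / ‖z‖ ^ d) := by
            apply mul_le_mul_of_nonneg_right _ hgz
            exact mul_le_mul_of_nonneg_left hz2 hL
        _ ≤ L * r j * (Cc * 2 ^ d / r j ^ d) := by
            apply mul_le_mul_of_nonneg_left hdiv (by positivity)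
    calc (∫⁻ z in A j, ENNReal.ofReal ‖g z‖)
        ≤ ∫⁻ _ in A j, ENNReal.ofReal (L * r j * (Cc * 2 ^ d / r j ^ d)) :=
          setLIntegral_mono' (hAmeas j) hb
      _ = ENNReal.ofReal (L * r j * (Cc * 2 ^ d / r j ^ d)) * volume (A j) :=
          setLIntegral_const _ _
      _ ≤ ENNReal.ofReal (L * r j * (Cc * 2 ^ d / r j ^ d)) *
            (ENNReal.ofReal (r j ^ d) * v) := by
          apply mul_le_mul_right
          have hsub : A j ⊆ closedBall (0 : EuclideanSpace ℝ (Fin d)) (r j) := by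
            rintro z ⟨_, hz2⟩
            simpa [mem_closedBall, dist_zero_right] using hz2
          refine (measure_mono hsub).trans ?_
          rw [Measure.addHaar_closedBall' volume _ hrj.le, hfinrank]
      _ = ENNReal.ofReal (L * Cc * 2 ^ d * R) * (ENNReal.ofReal ((2:ℝ)⁻¹ ^ j) * v) := by
          have hrj0 : (r j) ^ d ≠ 0 := by positivity
          have e1 : L * r j * (Cc * 2 ^ d / r j ^ d) * r j ^ d =
              (L * Cc * 2 ^ d * R) * ((2:ℝ)⁻¹ ^ j) := by
            rw [hr]; dsimp only
            field_simp
          rw [← mul_assoc, ← ENNReal.ofReal_mul (by positivity), e1,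
            ENNReal.ofReal_mul (by positivity), mul_assoc]
  -- assemble
  have hfun : (fun z => ENNReal.ofReal ‖g z‖) = S.indicator (fun z => ENNReal.ofReal ‖g z‖) := by
    funext z
    by_cases hz : z ∈ S
    · rw [Set.indicator_of_mem hz]
    · rw [Set.indicator_of_notMem hz, hg0 z hz]; simp
  have hlint : (∫⁻ z, ENNReal.ofReal ‖g z‖) ≤
      ENNReal.ofReal (L * Cc * 2 ^ (d + 1) * R * v.toReal) := by
    rw [hfun, lintegral_indicator hSmeas, ← hAunion, lintegral_iUnion hAmeas hAdisj]
    calc (∑' j, ∫⁻ z in A j, ENNReal.ofReal ‖g z‖)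
        ≤ ∑' j, ENNReal.ofReal (L * Cc * 2 ^ d * R) * (ENNReal.ofReal ((2:ℝ)⁻¹ ^ j) * v) :=
          ENNReal.tsum_le_tsum hann
      _ = ENNReal.ofReal (L * Cc * 2 ^ d * R) * v * ∑' j, ENNReal.ofReal ((2:ℝ)⁻¹ ^ j) := by
          rw [ENNReal.tsum_mul_left, ENNReal.tsum_mul_right]; ring
      _ = ENNReal.ofReal (L * Cc * 2 ^ d * R) * v * 2 := by
          congr 1
          have h1 : ∀ j : ℕ, ENNReal.ofReal ((2:ℝ)⁻¹ ^ j) = (2 : ENNReal)⁻¹ ^ j := by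
            intro j
            rw [ENNReal.ofReal_pow (by norm_num)]
            congr 1
            rw [ENNReal.ofReal_inv_of_pos (by norm_num)]
            norm_num
          simp_rw [h1]
          rw [ENNReal.tsum_geometric, ENNReal.one_sub_inv_two, inv_inv]
      _ = ENNReal.ofReal (L * Cc * 2 ^ (d + 1) * R * v.toReal) := by
          conv_lhs => rw [← ENNReal.ofReal_toReal hvfin]
          rw [← ENNReal.ofReal_ofNat 2, ← ENNReal.ofReal_mul (by positivity),
            ← ENNReal.ofReal_mul (by positivity)]
          congr 1
          rw [pow_succ]; ring
  calc ‖∫ z, g z‖ ≤ (∫⁻ z, ENNReal.ofReal ‖g z‖).toReal := norm_integral_le_lintegral_norm g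
    _ ≤ L * Cc * 2 ^ (d + 1) * R * v.toReal :=
        ENNReal.toReal_le_of_le_ofReal (by positivity) hlint


theorem ball_cancel_bound {d : ℕ} (hd : 1 ≤ d) (Cc : ℝ) (k : EuclideanSpace ℝ (Fin d) → ℂ)
    (hcanc : ∀ r R : ℝ, 0 < r → r < R →
      ‖∫ x in {x : EuclideanSpace ℝ (Fin d) | r < ‖x‖ ∧ ‖x‖ < R}, k x‖ ≤ Cc)
    (R : ℝ) (hR : 0 < R) (hki : IntegrableOn k (ball (0 : EuclideanSpace ℝ (Fin d)) R)) :
    ‖∫ z in ball (0 : EuclideanSpace ℝ (Fin d)) R, k z‖ ≤ Cc := by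
  haveI : Nontrivial (EuclideanSpace ℝ (Fin d)) :=
    Module.nontrivial_of_finrank_pos (R := ℝ)
      (by rw [finrank_euclideanSpace_fin]; omega)
  set s : ℕ → Set (EuclideanSpace ℝ (Fin d)) :=
    fun n => {z | R / (n + 2) < ‖z‖ ∧ ‖z‖ < R} with hs
  have hsm : ∀ n, MeasurableSet (s n) :=
    fun n => ((isOpen_lt continuous_const continuous_norm).inter
      (isOpen_lt continuous_norm continuous_const)).measurableSet
  have hmono : Monotone s := by
    intro m n hmn z hz
    refine ⟨lt_of_le_of_lt ?_ hz.1, hz.2⟩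
    apply div_le_div_of_nonneg_left hR.le (by positivity)
    have : (m : ℝ) ≤ n := Nat.cast_le.2 hmn
    linarith
  have hunion : (⋃ n, s n) = ball (0 : EuclideanSpace ℝ (Fin d)) R \ {0} := by
    ext z
    simp only [mem_iUnion, hs, mem_setOf_eq, mem_diff, mem_ball, dist_zero_right,
      mem_singleton_iff]
    constructor
    · rintro ⟨n, h1, h2⟩
      refine ⟨h2, ?_⟩
      intro h0; rw [h0] at h1; simp at h1
      exact absurd h1 (not_lt.2 (by positivity))
    · rintro ⟨h2, h0⟩
      have hz0 : 0 < ‖z‖ := norm_pos_iff.2 h0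
      obtain ⟨n, hn⟩ := exists_nat_gt (R / ‖z‖)
      refine ⟨n, ?_, h2⟩
      rw [div_lt_iff₀ (by positivity : (0:ℝ) < (n:ℝ) + 2)]
      have h3 : R / ‖z‖ < (n : ℝ) + 2 := by linarith
      calc R = R / ‖z‖ * ‖z‖ := by field_simp
        _ < ((n:ℝ) + 2) * ‖z‖ := by
            exact mul_lt_mul_of_pos_right h3 hz0
        _ = ‖z‖ * ((n:ℝ) + 2) := by ring
  have hfi : IntegrableOn k (⋃ n, s n) := by
    rw [hunion]; exact hki.mono_set diff_subset
  have hlim := tendsto_setIntegral_of_monotone hsm hmono hfi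
  have heq : (∫ z in ⋃ n, s n, k z) = ∫ z in ball (0 : EuclideanSpace ℝ (Fin d)) R, k z := by
    rw [hunion]
    apply setIntegral_congr_set
    refine diff_ae_eq_self.2 ?_
    exact measure_mono_null inter_subset_right (measure_singleton 0)
  rw [← heq]
  apply le_of_tendsto hlim.norm
  filter_upwards with n
  have hn0 : (0:ℝ) ≤ (n:ℝ) := Nat.cast_nonneg n
  have hlt : R / ((n:ℝ) + 2) < R := by
    rw [div_lt_iff₀ (by positivity)]
    nlinarith
  exact hcanc (R / (n + 2)) R (by positivity) hlt


set_option maxHeartbeats 2000000 in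
/-- Key pointwise estimate behind the Cotlar inequality: if `k` satisfies the size,
`γ`-Lipschitz and cancellation conditions, and `φ` is a smooth radial radially-decreasing
bump supported in `B(0,1/2)` with `∫φ = 1`, then
`|k(x)·1_{|x|>ε} - (φ_ε * k)(x)| ≤ C' ε^{-d} (1 + |x|/ε)^{-(d+γ)}`. -/
theorem stmt11 (d : ℕ) (hd : 1 ≤ d) (C γ : ℝ) (hC : 0 < C) (hγ : 0 < γ)
    (k : EuclideanSpace ℝ (Fin d) → ℂ) (hk : Measurable k)
    (hsize : ∀ x : EuclideanSpace ℝ (Fin d), x ≠ 0 → ‖k x‖ ≤ C / ‖x‖ ^ (d : ℕ))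
    (hlip : ∀ x y : EuclideanSpace ℝ (Fin d), 2 * ‖y‖ ≤ ‖x‖ → x ≠ 0 →
      ‖k x - k (x - y)‖ ≤ C * ‖y‖ ^ γ / ‖x‖ ^ ((d : ℝ) + γ))
    (hcanc : ∀ r R : ℝ, 0 < r → r < R →
      ‖∫ x in {x : EuclideanSpace ℝ (Fin d) | r < ‖x‖ ∧ ‖x‖ < R}, k x‖ ≤ C)
    (φ : EuclideanSpace ℝ (Fin d) → ℝ)
    (hsmooth : ContDiff ℝ (⊤ : ℕ∞) φ) (hφpos : ∀ z, 0 ≤ φ z)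
    (hrad : ∀ z w : EuclideanSpace ℝ (Fin d), ‖z‖ = ‖w‖ → φ z = φ w)
    (hdec : ∀ z w : EuclideanSpace ℝ (Fin d), ‖z‖ ≤ ‖w‖ → φ w ≤ φ z)
    (hsupp : Function.support φ ⊆ Metric.ball 0 (1 / 2))
    (hint : ∫ z, φ z = 1) :
    ∃ C' > (0 : ℝ), ∀ ε : ℝ, 0 < ε → ∀ x : EuclideanSpace ℝ (Fin d),
      ‖Set.indicator {x' : EuclideanSpace ℝ (Fin d) | ε < ‖x'‖} k x -
          ∫ y, (((ε ^ (d : ℕ))⁻¹ * φ (ε⁻¹ • y) : ℝ) : ℂ) * k (x - y)‖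
        ≤ C' * (ε ^ (d : ℕ))⁻¹ * (1 + ‖x‖ / ε) ^ (-((d : ℝ) + γ)) := by
  classical
  have hφc : Continuous φ := hsmooth.continuous
  have hφcs : HasCompactSupport φ := by
    apply HasCompactSupport.intro (isCompact_closedBall (0 : EuclideanSpace ℝ (Fin d)) (1/2))
    intro z hz
    by_contra hne
    exact hz (ball_subset_closedBall (hsupp hne))
  obtain ⟨K, hK⟩ := hsmooth.lipschitzWith_of_hasCompactSupport hφcs (by simp)
  set L : ℝ := (K : ℝ) + 1 with hLdef
  have hL : 0 < L := by positivity
  have hLip : ∀ u v : EuclideanSpace ℝ (Fin d), |φ u - φ v| ≤ L * ‖u - v‖ := by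
    intro u v
    have h1 := hK.dist_le_mul u v
    rw [Real.dist_eq, dist_eq_norm] at h1
    have : (K : ℝ) * ‖u - v‖ ≤ L * ‖u - v‖ :=
      mul_le_mul_of_nonneg_right (by simp [hLdef]) (norm_nonneg _)
    linarith
  set A0 : ℝ := φ 0 with hA0def
  have hA0 : 0 ≤ A0 := hφpos 0
  have hφle : ∀ z, φ z ≤ A0 := fun z => hdec 0 z (by simp)
  set vB : ℝ := (volume (closedBall (0 : EuclideanSpace ℝ (Fin d)) 1)).toReal with hvBdef
  have hvB : 0 ≤ vB := ENNReal.toReal_nonneg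
  set s : ℝ := (d : ℝ) + γ with hsdef
  have hs0 : 0 < s := by positivity
  refine ⟨C * 2 ^ (d : ℕ) + (L * C * 2 ^ (d + 2) * vB + A0 * C) * (2 : ℝ) ^ s + 1,
    by positivity, ?_⟩
  set C' : ℝ := C * 2 ^ (d : ℕ) + (L * C * 2 ^ (d + 2) * vB + A0 * C) * (2 : ℝ) ^ s + 1
    with hC'def
  have hC'1 : C * 2 ^ (d : ℕ) ≤ C' := by
    rw [hC'def]
    have h2s : (0:ℝ) < (2:ℝ) ^ s := Real.rpow_pos_of_pos (by norm_num) s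
    nlinarith [mul_nonneg (by positivity : (0:ℝ) ≤ L * C * 2 ^ (d + 2) * vB + A0 * C) h2s.le]
  have hC'2 : (L * C * 2 ^ (d + 2) * vB + A0 * C) * (2 : ℝ) ^ s ≤ C' := by
    have h0 : (0:ℝ) ≤ C * 2 ^ (d : ℕ) := by positivity
    rw [hC'def]; linarith
  intro ε hε x
  set φε : EuclideanSpace ℝ (Fin d) → ℝ := fun y => (ε ^ (d : ℕ))⁻¹ * φ (ε⁻¹ • y) with hφεdef
  have hεd : (0:ℝ) < ε ^ (d : ℕ) := by positivity
  have hφεc : Continuous φε := continuous_const.mul (hφc.comp (continuous_const_smul ε⁻¹))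
  have hφεnn : ∀ y, 0 ≤ φε y := fun y => mul_nonneg (by positivity) (hφpos _)
  have hφεsupp : ∀ y : EuclideanSpace ℝ (Fin d), φε y ≠ 0 → ‖y‖ < ε / 2 := by
    intro y hy
    have h1 : φ (ε⁻¹ • y) ≠ 0 := fun h => hy (by simp [hφεdef, h])
    have h2 := hsupp h1
    rw [mem_ball_zero_iff, norm_smul, norm_inv, Real.norm_eq_abs, abs_of_pos hε] at h2
    have := (div_lt_iff₀ hε).1 (by rw [div_eq_inv_mul]; exact h2)
    linarith
  have hφεle : ∀ y, φε y ≤ (ε ^ (d : ℕ))⁻¹ * A0 :=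
    fun y => mul_le_mul_of_nonneg_left (hφle _) (by positivity)
  set L' : ℝ := L * (ε ^ (d : ℕ))⁻¹ * ε⁻¹ with hL'def
  have hL' : 0 < L' := by positivity
  have hφεlip : ∀ u v : EuclideanSpace ℝ (Fin d), |φε u - φε v| ≤ L' * ‖u - v‖ := by
    intro u v
    have h1 : φε u - φε v = (ε ^ (d : ℕ))⁻¹ * (φ (ε⁻¹ • u) - φ (ε⁻¹ • v)) := by
      rw [hφεdef]; ring
    rw [h1, abs_mul, abs_of_pos (by positivity : (0:ℝ) < (ε ^ (d : ℕ))⁻¹)]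
    have h2 := hLip (ε⁻¹ • u) (ε⁻¹ • v)
    rw [← smul_sub, norm_smul, norm_inv, Real.norm_eq_abs, abs_of_pos hε] at h2
    calc (ε ^ (d : ℕ))⁻¹ * |φ (ε⁻¹ • u) - φ (ε⁻¹ • v)|
        ≤ (ε ^ (d : ℕ))⁻¹ * (L * (ε⁻¹ * ‖u - v‖)) :=
          mul_le_mul_of_nonneg_left h2 (by positivity)
      _ = L' * ‖u - v‖ := by rw [hL'def]; ring
  have hφεcs : HasCompactSupport φε := by
    apply HasCompactSupport.intro (isCompact_closedBall (0 : EuclideanSpace ℝ (Fin d)) (ε/2))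
    intro z hz
    by_contra hne
    exact hz (mem_closedBall_zero_iff.2 (le_of_lt (hφεsupp z hne)))
  have hφεint : Integrable φε := hφεc.integrable_of_hasCompactSupport hφεcs
  have hφεint1 : ∫ y, φε y = 1 := by
    rw [hφεdef]
    rw [integral_const_mul]
    rw [Measure.integral_comp_inv_smul_of_nonneg volume φ hε.le, hint,
      finrank_euclideanSpace_fin]
    simp [smul_eq_mul]
    rw [inv_mul_cancel₀ hεd.ne']
  set h : EuclideanSpace ℝ (Fin d) → ℂ := fun y => ((φε y : ℝ) : ℂ) * k (x - y) with hhdef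
  have hmeas_h : AEStronglyMeasurable h volume := by
    apply AEStronglyMeasurable.mul
    · exact (Complex.continuous_ofReal.comp hφεc).aestronglyMeasurable
    · exact (hk.comp (measurable_id.const_sub x)).aestronglyMeasurable
  have hgoal_int : (∫ y, (((ε ^ (d : ℕ))⁻¹ * φ (ε⁻¹ • y) : ℝ) : ℂ) * k (x - y)) = ∫ y, h y := rfl
  have hRfac_pos : (0:ℝ) < (1 + ‖x‖ / ε) ^ (-s) :=
    Real.rpow_pos_of_pos (by positivity) _
  rw [hgoal_int]
  by_cases hxε : ε < ‖x‖
  -- ================= CASE A : ε < ‖x‖ =================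
  · have hmem : x ∈ {x' : EuclideanSpace ℝ (Fin d) | ε < ‖x'‖} := hxε
    rw [Set.indicator_of_mem hmem]
    have hx0 : x ≠ 0 := fun hh => by rw [hh] at hxε; simp at hxε; linarith
    have hnx : (0:ℝ) < ‖x‖ := lt_trans hε hxε
    have hkb : ∀ y, ‖h y‖ ≤ φε y * (C / (ε/2) ^ (d : ℕ)) := by
      intro y
      by_cases hy : φε y = 0
      · simp [hhdef, hy]
      · have hylt : ‖y‖ < ε / 2 := hφεsupp y hy
        have hxy : ε / 2 < ‖x - y‖ := by
          have := norm_sub_norm_le x y  -- ‖x‖ - ‖y‖ ≤ ‖x - y‖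
          linarith
        have hxy0 : x - y ≠ 0 := fun hh => by
          rw [hh] at hxy; simp at hxy; linarith
        have hk1 : ‖k (x - y)‖ ≤ C / (ε/2) ^ (d : ℕ) := by
          refine (hsize _ hxy0).trans ?_
          apply div_le_div_of_nonneg_left hC.le (by positivity)
          exact pow_le_pow_left₀ (by positivity) hxy.le d
        rw [hhdef]
        simp only [norm_mul, Complex.norm_real, Real.norm_eq_abs,
          abs_of_nonneg (hφεnn y)]
        exact mul_le_mul_of_nonneg_left hk1 (hφεnn y)
    have hInt_h : Integrable h :=
      Integrable.mono' (hφεint.mul_const _) hmeas_h (Filter.Eventually.of_forall hkb)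
    have hsmul_eq : (fun y => φε y • k (x - y)) = h := by
      funext y; rw [hhdef]; simp [Complex.real_smul]
    have hInt_smul : Integrable (fun y => φε y • k (x - y)) := by rw [hsmul_eq]; exact hInt_h
    have hconst : Integrable (fun y => φε y • k x) := hφεint.smul_const (k x)
    have key : k x - ∫ y, h y = ∫ y, φε y • (k x - k (x - y)) := by
      have e1 : (∫ y, φε y • (k x - k (x - y))) =
          (∫ y, φε y • k x) - ∫ y, φε y • k (x - y) := by
        rw [← integral_sub hconst hInt_smul]
        congr 1; funext y; rw [smul_sub]
      rw [e1, integral_smul_const, hφεint1, one_smul, hsmul_eq]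
    rw [key]
    set M' : ℝ := C * (ε/2) ^ γ / ‖x‖ ^ s with hM'def
    have hM'nn : 0 ≤ M' := by
      rw [hM'def]
      positivity
    have hb2 : ∀ y, ‖φε y • (k x - k (x - y))‖ ≤ φε y * M' := by
      intro y
      by_cases hy : φε y = 0
      · simp [hy]
      · have hylt : ‖y‖ < ε / 2 := hφεsupp y hy
        have h2y : 2 * ‖y‖ ≤ ‖x‖ := by linarith
        have hkk := hlip x y h2y hx0
        have hyγ : ‖y‖ ^ γ ≤ (ε/2) ^ γ :=
          Real.rpow_le_rpow (norm_nonneg y) hylt.le hγ.le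
        have hkk2 : ‖k x - k (x - y)‖ ≤ M' := by
          refine hkk.trans ?_
          rw [hM'def]
          have hden : (0:ℝ) < ‖x‖ ^ s := Real.rpow_pos_of_pos hnx _
          gcongr
        rw [norm_smul, Real.norm_eq_abs, abs_of_nonneg (hφεnn y)]
        exact mul_le_mul_of_nonneg_left hkk2 (hφεnn y)
    have hIntsub : Integrable (fun y => φε y • (k x - k (x - y))) := by
      have : (fun y => φε y • (k x - k (x - y))) =
          fun y => φε y • k x - φε y • k (x - y) := by
        funext y; rw [smul_sub]
      rw [this]
      exact hconst.sub hInt_smul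
    have hnormint : ‖∫ y, φε y • (k x - k (x - y))‖ ≤ M' := by
      refine (norm_integral_le_integral_norm _).trans ?_
      have : (∫ y, ‖φε y • (k x - k (x - y))‖) ≤ ∫ y, φε y * M' := by
        apply integral_mono hIntsub.norm (hφεint.mul_const M') hb2
      refine this.trans ?_
      rw [integral_mul_const, hφεint1, one_mul]
    refine hnormint.trans ?_
    -- final comparison in Case A
    have h1 : 1 + ‖x‖ / ε ≤ 2 * (‖x‖ / ε) := by
      have : (1:ℝ) ≤ ‖x‖ / ε := (one_le_div hε).2 hxε.le
      linarith
    have h2 : (2 * (‖x‖ / ε)) ^ (-s) ≤ (1 + ‖x‖ / ε) ^ (-s) := by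
      rw [Real.rpow_neg (by positivity), Real.rpow_neg (by positivity)]
      apply inv_anti₀ (Real.rpow_pos_of_pos (by positivity) _)
      exact Real.rpow_le_rpow (by positivity) h1 hs0.le
    have key_eq : C' * (ε ^ (d : ℕ))⁻¹ * ((2 * (‖x‖ / ε)) ^ (-s)) =
        (C' / 2 ^ (d : ℕ)) * ((ε/2) ^ γ / ‖x‖ ^ s) := by
      have e2s : (2:ℝ) ^ s = 2 ^ (d:ℕ) * 2 ^ γ := by
        show (2:ℝ) ^ ((d:ℝ) + γ) = _
        rw [Real.rpow_add (by norm_num : (0:ℝ) < 2), Real.rpow_natCast]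
      have eεs : ε ^ s = ε ^ (d:ℕ) * ε ^ γ := by
        show ε ^ ((d:ℝ) + γ) = _
        rw [Real.rpow_add hε, Real.rpow_natCast]
      rw [Real.rpow_neg (by positivity),
        Real.mul_rpow (by norm_num) (by positivity),
        Real.div_rpow (norm_nonneg x) hε.le,
        Real.div_rpow hε.le (by norm_num), e2s, eεs]
      have hx_s : (0:ℝ) < ‖x‖ ^ s := Real.rpow_pos_of_pos hnx _
      have hεγ : (0:ℝ) < ε ^ γ := Real.rpow_pos_of_pos hε _
      have h2γ : (0:ℝ) < (2:ℝ) ^ γ := Real.rpow_pos_of_pos (by norm_num) _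
      field_simp
    calc M' ≤ (C' / 2 ^ (d : ℕ)) * ((ε/2) ^ γ / ‖x‖ ^ s) := by
          rw [hM'def, mul_div_assoc]
          apply mul_le_mul_of_nonneg_right ?_ ?_
          · rw [le_div_iff₀ (by positivity : (0:ℝ) < (2:ℝ) ^ (d:ℕ))]
            exact hC'1
          · positivity
      _ = C' * (ε ^ (d : ℕ))⁻¹ * ((2 * (‖x‖ / ε)) ^ (-s)) := key_eq.symm
      _ ≤ C' * (ε ^ (d : ℕ))⁻¹ * (1 + ‖x‖ / ε) ^ (-s) := by
          apply mul_le_mul_of_nonneg_left h2 (by positivity)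
  -- ================= CASE B : ‖x‖ ≤ ε =================
  · push_neg at hxε
    have hnotmem : x ∉ {x' : EuclideanSpace ℝ (Fin d) | ε < ‖x'‖} := by
      simp only [mem_setOf_eq, not_lt]; exact hxε
    rw [Set.indicator_of_notMem hnotmem, zero_sub, norm_neg]
    have hb0 : (0:ℝ) ≤ ‖x‖ / ε := div_nonneg (norm_nonneg _) hε.le
    have hb2 : 1 + ‖x‖ / ε ≤ 2 := by
      have : ‖x‖ / ε ≤ 1 := (div_le_one hε).2 hxε
      linarith
    have hfac : (2:ℝ) ^ (-s) ≤ (1 + ‖x‖ / ε) ^ (-s) := by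
      rw [Real.rpow_neg (by norm_num : (0:ℝ) ≤ 2), Real.rpow_neg (by linarith : (0:ℝ) ≤ 1 + ‖x‖ / ε)]
      apply inv_anti₀ (Real.rpow_pos_of_pos (by linarith) _)
      exact Real.rpow_le_rpow (by linarith) hb2 hs0.le
    have hRHS' : C' * (ε ^ (d:ℕ))⁻¹ * (2:ℝ) ^ (-s) ≤
        C' * (ε ^ (d:ℕ))⁻¹ * (1 + ‖x‖ / ε) ^ (-s) :=
      mul_le_mul_of_nonneg_left hfac (by positivity)
    by_cases hIh : Integrable h
    case neg =>
      rw [integral_undef hIh]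
      simp only [norm_zero]
      positivity
    case pos =>
    set ψk : EuclideanSpace ℝ (Fin d) → ℂ := fun z => ((φε (x - z) : ℝ) : ℂ) * k z with hψkdef
    have heqfun : (fun z => h (x - z)) = ψk := by
      funext z; simp only [hhdef, hψkdef, sub_sub_cancel]
    have hIψk : Integrable ψk := by
      rw [← heqfun]
      exact (integrable_comp_sub_left h x).2 hIh
    have hIeq : (∫ y, h y) = ∫ z, ψk z := by
      rw [← MeasureTheory.integral_sub_left_eq_self h volume x, heqfun]
    rw [hIeq]
    set a : ℝ := φε x with hadef
    have ha0 : 0 ≤ a := hφεnn x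
    set Bb : Set (EuclideanSpace ℝ (Fin d)) := ball 0 (2*ε) with hBdef
    have hBmeas : MeasurableSet Bb := measurableSet_ball
    have h0Bb : (0 : EuclideanSpace ℝ (Fin d)) ∈ Bb := by
      rw [hBdef, mem_ball_zero_iff]; simp; positivity
    set q : EuclideanSpace ℝ (Fin d) → ℂ := Bb.indicator (fun z => ((a:ℝ):ℂ) * k z) with hqdef
    have hqfacts : Integrable q ∧ ‖∫ z, q z‖ ≤ (ε ^ (d:ℕ))⁻¹ * A0 * C := by
      by_cases ha : a = 0
      · have hq0 : q = 0 := by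
          funext z; rw [hqdef]
          simp [ha]
        rw [hq0]
        refine ⟨integrable_zero _ _ _, ?_⟩
        simp only [Pi.zero_apply, integral_zero, norm_zero]
        positivity
      · have hapos : 0 < a := lt_of_le_of_ne ha0 (Ne.symm ha)
        set δ : ℝ := a / (2 * L') with hδdef
        have hδpos : 0 < δ := by rw [hδdef]; positivity
        have hψge : ∀ z : EuclideanSpace ℝ (Fin d), ‖z‖ ≤ δ → a / 2 ≤ φε (x - z) := by
          intro z hz
          have h2 := hφεlip (x - z) x
          have he : (x - z) - x = -z := by abel
          rw [he, norm_neg] at h2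
          have h1 : |φε (x - z) - a| ≤ L' * ‖z‖ := h2
          have h3 : L' * ‖z‖ ≤ L' * δ := mul_le_mul_of_nonneg_left hz hL'.le
          have h4 : L' * δ = a / 2 := by
            rw [hδdef]; field_simp
          have h5 := abs_le.1 h1
          linarith [h5.1, h5.2]
        have hs1 : IntegrableOn k (Bb ∩ closedBall 0 δ) := by
          apply Integrable.mono' (g := fun z => (2/a) * ‖ψk z‖)
            ((hIψk.norm.const_mul (2/a)).integrableOn)
            hk.aestronglyMeasurable.restrict
          rw [ae_restrict_iff' (hBmeas.inter measurableSet_closedBall)]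
          filter_upwards with z hz
          have hzδ : ‖z‖ ≤ δ := by
            have := hz.2
            rwa [mem_closedBall_zero_iff] at this
          have hψ := hψge z hzδ
          have he1 : ‖ψk z‖ = φε (x - z) * ‖k z‖ := by
            rw [hψkdef]
            simp [norm_mul, Complex.norm_real, abs_of_nonneg (hφεnn _)]
          rw [he1]
          calc ‖k z‖ = (2/a) * (a/2) * ‖k z‖ := by field_simp
            _ ≤ (2/a) * (φε (x-z)) * ‖k z‖ := by
                apply mul_le_mul_of_nonneg_right ?_ (norm_nonneg _)
                exact mul_le_mul_of_nonneg_left hψ (by positivity)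
            _ = (2/a) * (φε (x-z) * ‖k z‖) := by ring
        have hs2 : IntegrableOn k (Bb \ closedBall 0 δ) := by
          apply Measure.integrableOn_of_bounded (M := C / δ ^ (d:ℕ))
          · exact ((measure_mono diff_subset).trans_lt measure_ball_lt_top).ne
          · exact hk.aestronglyMeasurable
          · rw [ae_restrict_iff' (hBmeas.diff measurableSet_closedBall)]
            filter_upwards with z hz
            have hzδ : δ < ‖z‖ := by
              have := hz.2
              rw [mem_closedBall_zero_iff] at this
              exact not_le.1 this
            have hz0 : z ≠ 0 := by
              intro hh; rw [hh] at hzδ; simp at hzδ; linarith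
            refine (hsize z hz0).trans ?_
            apply div_le_div_of_nonneg_left hC.le (by positivity)
            exact pow_le_pow_left₀ hδpos.le hzδ.le d
        have hkB : IntegrableOn k Bb := by
          have hsub : Bb ⊆ (Bb ∩ closedBall 0 δ) ∪ (Bb \ closedBall 0 δ) := by
            intro z hz
            by_cases hzc : z ∈ closedBall 0 δ
            · exact Or.inl ⟨hz, hzc⟩
            · exact Or.inr ⟨hz, hzc⟩
          exact (hs1.union hs2).mono_set hsub
        have hIq : Integrable q := by
          rw [hqdef]
          exact IntegrableOn.integrable_indicator (hkB.const_mul _) hBmeas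
        have hJ : ‖∫ z in Bb, k z‖ ≤ C :=
          ball_cancel_bound hd C k hcanc (2*ε) (by positivity) hkB
        have hqint : (∫ z, q z) = ((a:ℝ):ℂ) * ∫ z in Bb, k z := by
          rw [hqdef, integral_indicator hBmeas, integral_const_mul]
        refine ⟨hIq, ?_⟩
        rw [hqint, norm_mul]
        have hna : ‖((a:ℝ):ℂ)‖ = a := by
          simp [Complex.norm_real, abs_of_nonneg ha0]
        rw [hna]
        calc a * ‖∫ z in Bb, k z‖ ≤ a * C := mul_le_mul_of_nonneg_left hJ ha0
          _ ≤ (ε ^ (d:ℕ))⁻¹ * A0 * C := by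
              apply mul_le_mul_of_nonneg_right ?_ hC.le
              exact hφεle x
    obtain ⟨hIq, hqnorm⟩ := hqfacts
    set g : EuclideanSpace ℝ (Fin d) → ℂ := fun z => ψk z - q z with hgdef
    have hIg : Integrable g := hIψk.sub hIq
    have hsplit : (∫ z, ψk z) = (∫ z, g z) + ∫ z, q z := by
      rw [hgdef, integral_sub hIψk hIq]
      ring
    have hg0 : ∀ z : EuclideanSpace ℝ (Fin d), ¬(0 < ‖z‖ ∧ ‖z‖ ≤ 2*ε) → g z = 0 := by
      intro z hz
      push_neg at hz
      by_cases hz0 : ‖z‖ = 0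
      · have hz0' : z = 0 := norm_eq_zero.1 hz0
        rw [hz0']
        simp only [hgdef, hψkdef, hqdef, Set.indicator_of_mem h0Bb, sub_zero]
        rw [hadef]
        ring
      · have hzpos : 0 < ‖z‖ := lt_of_le_of_ne (norm_nonneg z) (Ne.symm hz0)
        have hz2ε : 2*ε < ‖z‖ := hz hzpos
        have hφ0 : φε (x - z) = 0 := by
          by_contra hne
          have hlt := hφεsupp _ hne
          have hge : ‖z‖ - ‖x‖ ≤ ‖z - x‖ := norm_sub_norm_le z x
          rw [norm_sub_rev] at hge
          linarith
        have hzB : z ∉ Bb := by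
          rw [hBdef, mem_ball_zero_iff]
          exact not_lt.2 hz2ε.le
        simp only [hgdef, hψkdef, hqdef, Set.indicator_of_notMem hzB, hφ0]
        simp
    have hgb : ∀ z : EuclideanSpace ℝ (Fin d), 0 < ‖z‖ → ‖z‖ ≤ 2*ε →
        ‖g z‖ ≤ L' * ‖z‖ * (C / ‖z‖ ^ (d:ℕ)) := by
      intro z hz0 hz2
      by_cases hzB : z ∈ Bb
      · have he : g z = (((φε (x - z) - a : ℝ)) : ℂ) * k z := by
          simp only [hgdef, hψkdef, hqdef, Set.indicator_of_mem hzB]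
          push_cast
          ring
        rw [he, norm_mul]
        have h1 : ‖(((φε (x - z) - a : ℝ)) : ℂ)‖ = |φε (x - z) - a| := by
          rw [Complex.norm_real, Real.norm_eq_abs]
        rw [h1]
        have h2 : |φε (x - z) - a| ≤ L' * ‖z‖ := by
          have h3 := hφεlip (x - z) x
          have he2 : (x - z) - x = -z := by abel
          rw [he2, norm_neg] at h3
          exact h3
        have h4 : ‖k z‖ ≤ C / ‖z‖ ^ (d:ℕ) := by
          apply hsize z
          intro hh; rw [hh] at hz0; simp at hz0
        calc |φε (x - z) - a| * ‖k z‖ ≤ (L' * ‖z‖) * (C / ‖z‖ ^ (d:ℕ)) :=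
              mul_le_mul h2 h4 (norm_nonneg _) (by positivity)
          _ = L' * ‖z‖ * (C / ‖z‖ ^ (d:ℕ)) := by ring
      · have hz2' : 2*ε ≤ ‖z‖ := by
          rw [hBdef, mem_ball_zero_iff] at hzB
          exact not_lt.1 hzB
        have hφ0 : φε (x - z) = 0 := by
          by_contra hne
          have hlt := hφεsupp _ hne
          have hge : ‖z‖ - ‖x‖ ≤ ‖z - x‖ := norm_sub_norm_le z x
          rw [norm_sub_rev] at hge
          linarith
        have hgz : g z = 0 := by
          simp only [hgdef, hψkdef, hqdef, Set.indicator_of_notMem hzB, hφ0]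
          simp
        rw [hgz]
        simp only [norm_zero]
        positivity
    have hgnorm : ‖∫ z, g z‖ ≤ L' * C * 2 ^ (d+1) * (2*ε) * vB :=
      dyadic_bound hd (2*ε) L' C (by positivity) hL'.le hC.le g hg0 hgb
    calc ‖∫ z, ψk z‖ ≤ ‖∫ z, g z‖ + ‖∫ z, q z‖ := by
          rw [hsplit]; exact norm_add_le _ _
      _ ≤ L' * C * 2 ^ (d+1) * (2*ε) * vB + (ε ^ (d:ℕ))⁻¹ * A0 * C :=
          add_le_add hgnorm hqnorm
      _ = (L * C * 2 ^ (d+2) * vB + A0 * C) * (ε ^ (d:ℕ))⁻¹ := by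
          rw [hL'def]
          field_simp
          ring
      _ ≤ (C' * (2:ℝ) ^ (-s)) * (ε ^ (d:ℕ))⁻¹ := by
          apply mul_le_mul_of_nonneg_right ?_ (by positivity)
          have h2s : (0:ℝ) < (2:ℝ) ^ s := Real.rpow_pos_of_pos (by norm_num) _
          rw [Real.rpow_neg (by norm_num : (0:ℝ) ≤ 2), ← div_eq_mul_inv, le_div_iff₀ h2s]
          exact hC'2
      _ = C' * (ε ^ (d:ℕ))⁻¹ * (2:ℝ) ^ (-s) := by ring
      _ ≤ C' * (ε ^ (d:ℕ))⁻¹ * (1 + ‖x‖ / ε) ^ (-s) := hRHS'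
end

section
/- Let Ω : S^{d-1} → ℂ be square-integrable and extend it to ℝ^d \ {0} by homogeneity of degree zero; set k_Ω(x) = Ω(x)/|x|^d. Let R > 0, u ∈ ℝ^d with |u| ≤ R, and m ≥ 1. Then ∫_{2^m R ≤ |x| ≤ 2^{m+1} R} |Ω(x)|² · | |x+u|^{-2d} - |x|^{-2d} | dx ≤ C_d · ‖Ω‖²_{L²(S^{d-1})} · 2^{-m} · (2^m R)^{-d}. -/
/-!
On the annulus `2^m R ≤ |x| ≤ 2^{m+1} R` we have `|u| ≤ 2^{-m} |x|`, so the mean value theorem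
for `t ↦ t^{-2d}` bounds `| |x+u|^{-2d} - |x|^{-2d} |` by `C_d 2^{-m} |x|^{-2d}`. What remains is
`∫_{annulus} |Ω(x)|² |x|^{-2d} dx`, which in polar coordinates splits into
`‖Ω‖²_{L²(S^{d-1})} · ∫_{2^m R}^{2^{m+1} R} r^{-d-1} dr ≤ ‖Ω‖²_{L²(S^{d-1})} (2^m R)^{-d}`.
-/

open MeasureTheory Metric Set

theorem abs_inv_pow_sub_inv_pow_le {s t : ℝ} (hs : 0 < s) (hts : 2 * |t - s| ≤ s) (n : ℕ) :
    |(t ^ n)⁻¹ - (s ^ n)⁻¹| ≤ n * 4 ^ n * |t - s| / s ^ (n + 1) := by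
  obtain ⟨ht_lo, ht_hi⟩ : s / 2 ≤ t ∧ t ≤ 2 * s := by
    constructor <;> linarith [neg_abs_le (t - s), le_abs_self (t - s)]
  have ht : 0 < t := by linarith
  have hmax : max |s| |t| ≤ 2 * s := by
    rw [abs_of_pos hs, abs_of_pos ht]; exact max_le (by linarith) ht_hi
  rcases n with _ | n
  · simp
  have hnum : |s ^ (n + 1) - t ^ (n + 1)| ≤ |t - s| * (n + 1) * (2 * s) ^ n := by
    grw [abs_pow_sub_pow_le, abs_sub_comm, Nat.add_sub_cancel, hmax]
    push_cast; rfl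
  have hden : (s / 2) ^ (n + 1) * s ^ (n + 1) ≤ t ^ (n + 1) * s ^ (n + 1) := by gcongr
  calc |(t ^ (n + 1))⁻¹ - (s ^ (n + 1))⁻¹|
      = |s ^ (n + 1) - t ^ (n + 1)| / (t ^ (n + 1) * s ^ (n + 1)) := by
        rw [inv_sub_inv (by positivity) (by positivity), abs_div,
          abs_of_pos (by positivity : 0 < t ^ (n + 1) * s ^ (n + 1))]
    _ ≤ |t - s| * (n + 1) * (2 * s) ^ n / ((s / 2) ^ (n + 1) * s ^ (n + 1)) := by
        gcongr
    _ = (n + 1) * (2 ^ n * 2 ^ (n + 1)) * |t - s| / s ^ (n + 1 + 1) := by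
        rw [div_pow, mul_pow]
        field_simp
        ring
    _ ≤ (n + 1) * 4 ^ (n + 1) * |t - s| / s ^ (n + 1 + 1) := by
        gcongr
        rw [← pow_add, show (4 : ℝ) = 2 ^ 2 by norm_num, ← pow_mul]
        exact pow_le_pow_right₀ (by norm_num) (by omega)
    _ = _ := by push_cast; ring

theorem abs_inv_norm_add_pow_sub_inv_norm_pow_le {E : Type*} [SeminormedAddCommGroup E]
    {x u : E} (hx : 0 < ‖x‖) (hu : 2 * ‖u‖ ≤ ‖x‖) (n : ℕ) :
    |(‖x + u‖ ^ n)⁻¹ - (‖x‖ ^ n)⁻¹| ≤ n * 4 ^ n * ‖u‖ / ‖x‖ ^ (n + 1) := by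
  have hdiff : |‖x + u‖ - ‖x‖| ≤ ‖u‖ := by
    simpa using abs_norm_sub_norm_le (x + u) x
  grw [abs_inv_pow_sub_inv_pow_le hx (by linarith) n, hdiff]

theorem abs_inv_norm_add_pow_sub_inv_norm_pow_le_of_two_pow_mul_le {E : Type*}
    [SeminormedAddCommGroup E] {x u : E} {R : ℝ} {m : ℕ} (hR : 0 < R) (hm : 1 ≤ m)
    (hu : ‖u‖ ≤ R) (hx : 2 ^ m * R ≤ ‖x‖) (n : ℕ) :
    |(‖x + u‖ ^ n)⁻¹ - (‖x‖ ^ n)⁻¹| ≤ n * 4 ^ n * (2 ^ m)⁻¹ * (‖x‖ ^ n)⁻¹ := by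
  have hx0 : 0 < ‖x‖ := lt_of_lt_of_le (by positivity) hx
  have h2m : (2 : ℝ) ≤ 2 ^ m := le_self_pow₀ one_le_two (by omega)
  have hux : ‖u‖ / ‖x‖ ≤ (2 ^ m)⁻¹ := by
    rw [div_le_iff₀ hx0, inv_mul_eq_div, le_div_iff₀ (by positivity)]
    nlinarith
  calc |(‖x + u‖ ^ n)⁻¹ - (‖x‖ ^ n)⁻¹| ≤ n * 4 ^ n * ‖u‖ / ‖x‖ ^ (n + 1) :=
        abs_inv_norm_add_pow_sub_inv_norm_pow_le hx0 (by nlinarith) n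
    _ = n * 4 ^ n * (‖u‖ / ‖x‖) * (‖x‖ ^ n)⁻¹ := by
        field_simp
        ring
    _ ≤ n * 4 ^ n * (2 ^ m)⁻¹ * (‖x‖ ^ n)⁻¹ := by gcongr

theorem pow_sub_one_mul_inv_pow_two_mul_le {n : ℕ} (hn : 1 ≤ n) {a r : ℝ} (ha : 0 < a)
    (har : a ≤ r) : r ^ (n - 1) * (r ^ (2 * n))⁻¹ ≤ (a ^ (n + 1))⁻¹ := by
  have hr : 0 < r := ha.trans_le har
  rw [show 2 * n = (n - 1) + (n + 1) by omega, pow_add, mul_inv, ← mul_assoc,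
    mul_inv_cancel₀ (pow_ne_zero _ hr.ne'), one_mul]
  gcongr

theorem integrableOn_Icc_pow_mul_inv_pow {n : ℕ} {a b : ℝ} (ha : 0 < a) :
    IntegrableOn (fun r : ℝ ↦ r ^ (n - 1) * (r ^ (2 * n))⁻¹) (Icc a b) :=
  ContinuousOn.integrableOn_Icc <| (continuous_pow _).continuousOn.mul <|
    (continuous_pow _).continuousOn.inv₀ fun _ hr ↦ pow_ne_zero _ (ha.trans_le hr.1).ne'

theorem setIntegral_Icc_pow_mul_inv_pow_le {n : ℕ} (hn : 1 ≤ n) {a : ℝ} (ha : 0 < a) :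
    ∫ r in Icc a (2 * a), r ^ (n - 1) * (r ^ (2 * n))⁻¹ ≤ (a ^ n)⁻¹ := by
  calc ∫ r in Icc a (2 * a), r ^ (n - 1) * (r ^ (2 * n))⁻¹
      ≤ ∫ _ in Icc a (2 * a), (a ^ (n + 1))⁻¹ :=
        setIntegral_mono_on (integrableOn_Icc_pow_mul_inv_pow ha)
          (integrableOn_const measure_Icc_lt_top.ne) measurableSet_Icc
          fun r hr ↦ pow_sub_one_mul_inv_pow_two_mul_le hn ha hr.1
    _ = (a ^ n)⁻¹ := by
        rw [setIntegral_const, Real.volume_real_Icc_of_le (by linarith), smul_eq_mul]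
        field_simp
        ring

theorem integrableOn_Ioi_pow_mul_indicator_Icc {k : ℕ} {a b : ℝ} {g : ℝ → ℝ}
    (hg : IntegrableOn (fun r ↦ r ^ k * g r) (Icc a b)) :
    IntegrableOn (fun r ↦ r ^ k * (Icc a b).indicator g r) (Ioi 0) := by
  rw [funext fun r ↦ (indicator_mul_right (Icc a b) (· ^ k) g (i := r)).symm]
  exact ((integrable_indicator_iff measurableSet_Icc).2 hg).integrableOn

theorem setIntegral_Ioi_pow_mul_indicator_Icc (k : ℕ) {a b : ℝ} (ha : 0 < a) (g : ℝ → ℝ) :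
    ∫ r in Ioi 0, r ^ k * (Icc a b).indicator g r = ∫ r in Icc a b, r ^ k * g r := by
  rw [funext fun r ↦ (indicator_mul_right (Icc a b) (· ^ k) g (i := r)).symm,
    setIntegral_indicator measurableSet_Icc,
    inter_eq_right.2 fun r hr ↦ mem_Ioi.2 (ha.trans_le hr.1)]

theorem indicator_preimage_norm_mul {E : Type*} [Norm E] (s : Set ℝ) (f : E → ℝ) (g : ℝ → ℝ) :
    (norm ⁻¹' s).indicator (fun x ↦ f x * g ‖x‖) = fun x ↦ f x * s.indicator g ‖x‖ := by
  ext x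
  rw [indicator_mul_right]
  exact congrArg _ (indicator_comp_right norm)

theorem mul_fun_norm_smul_of_homogeneous {E : Type*} [NormedAddCommGroup E] [NormedSpace ℝ E]
    {f : E → ℝ} (hf : ∀ c : ℝ, 0 < c → ∀ x, f (c • x) = f x) (g : ℝ → ℝ) {r : ℝ} (hr : 0 < r)
    (θ : sphere (0 : E) 1) : f (r • θ.1) * g ‖r • θ.1‖ = f θ * g r := by
  rw [hf r hr, norm_smul, Real.norm_of_nonneg hr.le, norm_eq_of_mem_sphere θ, mul_one]

namespace MeasureTheory.Measure

theorem integral_volumeIoiPow (n : ℕ) (g : ℝ → ℝ) :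
    ∫ r : Ioi (0 : ℝ), g r ∂volumeIoiPow n = ∫ r in Ioi 0, r ^ n * g r := by
  simp only [volumeIoiPow, ENNReal.ofReal]
  rw [integral_withDensity_eq_integral_smul
      ((measurable_subtype_coe.pow_const _).real_toNNReal),
    integral_subtype_comap measurableSet_Ioi fun r ↦ Real.toNNReal (r ^ n) • g r]
  refine setIntegral_congr_fun measurableSet_Ioi fun r hr ↦ ?_
  rw [NNReal.smul_def, Real.coe_toNNReal _ (pow_nonneg hr.out.le _), smul_eq_mul]

theorem integrable_volumeIoiPow_iff {n : ℕ} {g : ℝ → ℝ} :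
    Integrable (fun r : Ioi (0 : ℝ) ↦ g r) (volumeIoiPow n) ↔
      IntegrableOn (fun r ↦ r ^ n * g r) (Ioi 0) := by
  rw [volumeIoiPow, integrable_withDensity_iff_integrable_smul' (by fun_prop) (by simp),
    integrableOn_iff_comap_subtypeVal measurableSet_Ioi]
  refine integrable_congr (.of_forall fun r ↦ ?_)
  simp [ENNReal.toReal_ofReal (pow_nonneg r.2.out.le n)]

end MeasureTheory.Measure

section Polar

variable {E : Type*} [NormedAddCommGroup E] [NormedSpace ℝ E] [FiniteDimensional ℝ E]
  [MeasurableSpace E] [BorelSpace E] (μ : Measure E) [μ.IsAddHaarMeasure]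
  {G : Type*} [NormedAddCommGroup G]

theorem measurePreserving_homeomorphUnitSphereProd_symm :
    MeasurePreserving (homeomorphUnitSphereProd E).symm
      (μ.toSphere.prod (Measure.volumeIoiPow (Module.finrank ℝ E - 1))) (μ.comap (↑)) :=
  μ.measurePreserving_homeomorphUnitSphereProd.symm
    (homeomorphUnitSphereProd E).toMeasurableEquiv

variable [Nontrivial E]

theorem integral_eq_integral_sphere_prod_Ioi [NormedSpace ℝ G] (F : E → G) :
    ∫ x, F x ∂μ = ∫ p : sphere (0 : E) 1 × Ioi (0 : ℝ), F (p.2.1 • p.1.1)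
      ∂μ.toSphere.prod (Measure.volumeIoiPow (Module.finrank ℝ E - 1)) := by
  conv_lhs => rw [← restrict_compl_singleton (μ := μ) 0,
    ← integral_subtype_comap (measurableSet_singleton _).compl]
  exact ((measurePreserving_homeomorphUnitSphereProd_symm μ).integral_comp
    (Homeomorph.measurableEmbedding _) (fun x ↦ F x)).symm

theorem integrable_iff_integrable_sphere_prod_Ioi {F : E → G} :
    Integrable F μ ↔
      Integrable (fun p : sphere (0 : E) 1 × Ioi (0 : ℝ) ↦ F (p.2.1 • p.1.1))
        (μ.toSphere.prod (Measure.volumeIoiPow (Module.finrank ℝ E - 1))) := by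
  conv_lhs => rw [← restrict_compl_singleton (μ := μ) 0]
  rw [← IntegrableOn, integrableOn_iff_comap_subtypeVal (measurableSet_singleton _).compl]
  exact ((measurePreserving_homeomorphUnitSphereProd_symm μ).integrable_comp_emb
    (Homeomorph.measurableEmbedding _)).symm

variable {μ} {f : E → ℝ} (hf : ∀ c : ℝ, 0 < c → ∀ x, f (c • x) = f x)
include hf

theorem integral_mul_fun_norm_of_homogeneous (g : ℝ → ℝ) :
    ∫ x, f x * g ‖x‖ ∂μ =
      (∫ θ : sphere (0 : E) 1, f θ ∂μ.toSphere) *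
        ∫ r in Ioi 0, r ^ (Module.finrank ℝ E - 1) * g r := by
  rw [integral_eq_integral_sphere_prod_Ioi, ← Measure.integral_volumeIoiPow,
    ← integral_prod_mul (fun θ : sphere (0 : E) 1 ↦ f θ)]
  exact integral_congr_ae (.of_forall fun p ↦ mul_fun_norm_smul_of_homogeneous hf g p.2.2 p.1)

theorem integrable_mul_fun_norm_of_homogeneous {g : ℝ → ℝ}
    (hfi : Integrable (fun θ : sphere (0 : E) 1 ↦ f θ) μ.toSphere)
    (hg : IntegrableOn (fun r ↦ r ^ (Module.finrank ℝ E - 1) * g r) (Ioi 0)) :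
    Integrable (fun x ↦ f x * g ‖x‖) μ := by
  rw [integrable_iff_integrable_sphere_prod_Ioi]
  exact (hfi.mul_prod (Measure.integrable_volumeIoiPow_iff.2 hg)).congr
    (.of_forall fun p ↦ (mul_fun_norm_smul_of_homogeneous hf g p.2.2 p.1).symm)

theorem integrableOn_annulus_mul_inv_norm_pow
    (hfi : Integrable (fun θ : sphere (0 : E) 1 ↦ f θ) μ.toSphere) {a : ℝ} (ha : 0 < a) :
    IntegrableOn (fun x ↦ f x * (‖x‖ ^ (2 * Module.finrank ℝ E))⁻¹)
      (norm ⁻¹' Icc a (2 * a)) μ := by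
  rw [← integrable_indicator_iff (measurable_norm measurableSet_Icc),
    indicator_preimage_norm_mul _ f fun r ↦ (r ^ (2 * Module.finrank ℝ E))⁻¹]
  exact integrable_mul_fun_norm_of_homogeneous hf hfi
    (integrableOn_Ioi_pow_mul_indicator_Icc (integrableOn_Icc_pow_mul_inv_pow ha))

theorem setIntegral_annulus_mul_inv_norm_pow_le (hf0 : ∀ x, 0 ≤ f x) {a : ℝ} (ha : 0 < a) :
    ∫ x in norm ⁻¹' Icc a (2 * a), f x * (‖x‖ ^ (2 * Module.finrank ℝ E))⁻¹ ∂μ ≤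
      (∫ θ : sphere (0 : E) 1, f θ ∂μ.toSphere) * (a ^ Module.finrank ℝ E)⁻¹ := by
  rw [← integral_indicator (measurable_norm measurableSet_Icc),
    indicator_preimage_norm_mul _ f fun r ↦ (r ^ (2 * Module.finrank ℝ E))⁻¹,
    integral_mul_fun_norm_of_homogeneous hf, setIntegral_Ioi_pow_mul_indicator_Icc _ ha]
  gcongr
  · exact integral_nonneg fun θ ↦ hf0 θ
  · exact setIntegral_Icc_pow_mul_inv_pow_le Module.finrank_pos ha

end Polar

/-- For `Ω ∈ L²(S^{d-1})` extended 0-homogeneously, `R > 0`, `|u| ≤ R` and `m ≥ 1`: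
`∫_{2^m R ≤ |x| ≤ 2^{m+1}R} |Ω(x)|² ||x+u|^{-2d} - |x|^{-2d}| dx
  ≤ C_d ‖Ω‖²_{L²(S^{d-1})} 2^{-m} (2^m R)^{-d}`. -/
theorem stmt13 (d : ℕ) (hd : 1 ≤ d) :
    ∃ C > (0 : ℝ), ∀ Ω : EuclideanSpace ℝ (Fin d) → ℂ,
      Measurable Ω → (∀ c : ℝ, 0 < c → ∀ x, Ω (c • x) = Ω x) →
      MemLp (fun θ : Metric.sphere (0 : EuclideanSpace ℝ (Fin d)) 1 => Ω θ) 2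
        (volume : Measure (EuclideanSpace ℝ (Fin d))).toSphere →
      ∀ R : ℝ, 0 < R → ∀ u : EuclideanSpace ℝ (Fin d), ‖u‖ ≤ R → ∀ m : ℕ, 1 ≤ m →
      (∫ x in {x : EuclideanSpace ℝ (Fin d) | 2 ^ m * R ≤ ‖x‖ ∧ ‖x‖ ≤ 2 ^ (m + 1) * R},
          ‖Ω x‖ ^ 2 * |(‖x + u‖ ^ (2 * d : ℕ))⁻¹ - (‖x‖ ^ (2 * d : ℕ))⁻¹|)
        ≤ C * (∫ θ : Metric.sphere (0 : EuclideanSpace ℝ (Fin d)) 1,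
              ‖Ω θ‖ ^ 2 ∂(volume : Measure (EuclideanSpace ℝ (Fin d))).toSphere) *
            ((2 : ℝ) ^ m)⁻¹ * ((2 ^ m * R) ^ (d : ℕ))⁻¹ := by
  have : Nonempty (Fin d) := ⟨⟨0, hd⟩⟩
  have hdim : Module.finrank ℝ (EuclideanSpace ℝ (Fin d)) = d := finrank_euclideanSpace_fin
  refine ⟨(2 * d : ℕ) * 4 ^ (2 * d), by positivity, ?_⟩
  intro Ω _ hΩ hΩ2 R hR u hu m hm
  set C : ℝ := (2 * d : ℕ) * 4 ^ (2 * d)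
  set a : ℝ := 2 ^ m * R
  have ha : 0 < a := by positivity
  have hf : ∀ c : ℝ, 0 < c → ∀ x, ‖Ω (c • x)‖ ^ 2 = ‖Ω x‖ ^ 2 := fun c hc x ↦ by rw [hΩ c hc]
  have hint := integrableOn_annulus_mul_inv_norm_pow (f := (‖Ω ·‖ ^ 2)) hf
    hΩ2.norm.integrable_sq ha
  have hbound := setIntegral_annulus_mul_inv_norm_pow_le (μ := volume) (f := (‖Ω ·‖ ^ 2)) hf
    (fun _ ↦ by positivity) ha
  rw [hdim] at hint hbound
  have hpointwise : ∀ x ∈ norm ⁻¹' Icc a (2 * a),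
      ‖Ω x‖ ^ 2 * |(‖x + u‖ ^ (2 * d))⁻¹ - (‖x‖ ^ (2 * d))⁻¹| ≤
        C * (2 ^ m)⁻¹ * (‖Ω x‖ ^ 2 * (‖x‖ ^ (2 * d))⁻¹) := fun x hx ↦ by
    grw [abs_inv_norm_add_pow_sub_inv_norm_pow_le_of_two_pow_mul_le hR hm hu hx.1]
    exact (by ring : _ = _).le
  rw [show (2 : ℝ) ^ (m + 1) * R = 2 * a by ring]
  calc _ ≤ ∫ x in norm ⁻¹' Icc a (2 * a), C * (2 ^ m)⁻¹ * (‖Ω x‖ ^ 2 * (‖x‖ ^ (2 * d))⁻¹) :=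
        integral_mono_of_nonneg (.of_forall fun x ↦ by positivity) (hint.const_mul _)
          ((ae_restrict_iff' (measurable_norm measurableSet_Icc)).2 (.of_forall hpointwise))
    _ = C * (2 ^ m)⁻¹ * ∫ x in norm ⁻¹' Icc a (2 * a), ‖Ω x‖ ^ 2 * (‖x‖ ^ (2 * d))⁻¹ :=
        integral_const_mul _ _
    _ ≤ _ := by
        grw [hbound]
        exact (by ring : _ = _).le
end
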